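/- Every prime z-filter with the countable intersection property on a Tychonoff space is contained in a unique real z-ultrafilter. -/
import Mathlib


open Set Topology

variable {X : Type*}

def IsZeroSet [TopologicalSpace X] (Z : Set X) : Prop :=
  ∃ f : X → ℝ, Continuous f ∧ Z = {x | f x = 0}

def IsZFilter [TopologicalSpace X] (F : Set (Set X)) : Prop :=
  (∀ Z ∈ F, IsZeroSet Z) ∧ (∅ : Set X) ∉ F ∧ Set.univ ∈ F ∧
  (∀ Z₁ ∈ F, ∀ Z₂ ∈ F, Z₁ ∩ Z₂ ∈ F) ∧
  (∀ Z₁ ∈ F, ∀ Z₂ : Set X, IsZeroSet Z₂ → Z₁ ⊆ Z₂ → Z₂ ∈ F)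

def IsZUltrafilter [TopologicalSpace X] (F : Set (Set X)) : Prop :=
  IsZFilter F ∧ ∀ G : Set (Set X), IsZFilter G → F ⊆ G → G = F

def IsPrimeZFilter [TopologicalSpace X] (F : Set (Set X)) : Prop :=
  IsZFilter F ∧ ∀ Z₁ Z₂ : Set X, IsZeroSet Z₁ → IsZeroSet Z₂ → Z₁ ∪ Z₂ ∈ F →
    Z₁ ∈ F ∨ Z₂ ∈ F

def HasCIP (F : Set (Set X)) : Prop :=
  ∀ s : ℕ → Set X, (∀ n, s n ∈ F) → (⋂ n, s n).Nonempty

def IsFixedFamily (F : Set (Set X)) : Prop := (⋂₀ F).Nonempty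

def IsRealcompact (Y : Type*) [TopologicalSpace Y] : Prop :=
  ∀ F : Set (Set Y), IsZUltrafilter F → HasCIP F → IsFixedFamily F

def CompletelySeparated [TopologicalSpace X] (A B : Set X) : Prop :=
  ∃ f : X → ℝ, Continuous f ∧ (∀ x ∈ A, f x = 0) ∧ (∀ x ∈ B, f x = 1)

def IsHard [TopologicalSpace X] (H : Set X) : Prop :=
  IsClosed H ∧ ∃ K : Set X, IsCompact K ∧ ∀ V : Set X, IsOpen V → K ⊆ V →
    ∃ P : Set X, IsRealcompact ↥P ∧ CompletelySeparated (H \ V) Pᶜ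

def IsPseudocompact (Y : Type*) [TopologicalSpace Y] : Prop :=
  ∀ f : Y → ℝ, Continuous f → ∃ M : ℝ, ∀ y, |f y| ≤ M

def NearlyPseudocompact (Y : Type*) [TopologicalSpace Y] : Prop :=
  ∃ X₁ X₂ : Set Y, X₁ ∪ X₂ = Set.univ ∧
    X₁ = closure (interior X₁) ∧
    X₁ = closure {y : Y | ∃ K : Set Y, IsCompact K ∧ K ∈ nhds y} ∧
    IsPseudocompact ↥X₁ ∧
    X₂ = closure (interior X₂) ∧
    (∀ y ∈ X₂, ¬ ∃ N ∈ nhds y, IsRealcompact ↥N) ∧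
    interior (X₁ ∩ X₂) = (∅ : Set Y)

def IsHZFilter [TopologicalSpace X] (F : Set (Set X)) : Prop :=
  IsZFilter F ∧ ∀ Z ∈ F, ∃ H ∈ F, IsHard H ∧ H ⊆ Z

def IsHZUltrafilter [TopologicalSpace X] (F : Set (Set X)) : Prop :=
  IsZUltrafilter F ∧ ∃ H ∈ F, IsHard H

def deltaX (X : Type*) [TopologicalSpace X] : Type _ :=
  {F : Set (Set X) // IsZUltrafilter F ∧ (IsFixedFamily F ∨ ∃ H ∈ F, IsHard H)}

def deltaCl [TopologicalSpace X] (Z : Set X) : Set (deltaX X) :=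
  {p | Z ∈ p.1}

instance [TopologicalSpace X] : TopologicalSpace (deltaX X) :=
  TopologicalSpace.generateFrom {U | ∃ Z : Set X, IsZeroSet Z ∧ U = (deltaCl Z)ᶜ}

def pointUltra [TopologicalSpace X] (x : X) : Set (Set X) :=
  {Z | IsZeroSet Z ∧ x ∈ Z}
lemma isZeroSet_le [TopologicalSpace X] {f : X → ℝ} (hf : Continuous f) (c : ℝ) :
    IsZeroSet {x | f x ≤ c} := by
  refine ⟨fun x => max (f x - c) 0, (hf.sub continuous_const).max continuous_const, ?_⟩
  ext x; simp [max_eq_right_iff, sub_nonpos]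

lemma isZeroSet_ge [TopologicalSpace X] {f : X → ℝ} (hf : Continuous f) (c : ℝ) :
    IsZeroSet {x | c ≤ f x} := by
  refine ⟨fun x => max (c - f x) 0, (continuous_const.sub hf).max continuous_const, ?_⟩
  ext x; simp [max_eq_right_iff, sub_nonpos]

lemma isZeroSet_univ' [TopologicalSpace X] : IsZeroSet (univ : Set X) :=
  ⟨fun _ => 0, continuous_const, by ext x; simp⟩

lemma IsZeroSet.inter' [TopologicalSpace X] {Z₁ Z₂ : Set X} (h₁ : IsZeroSet Z₁)
    (h₂ : IsZeroSet Z₂) : IsZeroSet (Z₁ ∩ Z₂) := by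
  obtain ⟨f, hf, rfl⟩ := h₁
  obtain ⟨g, hg, rfl⟩ := h₂
  refine ⟨fun x => |f x| + |g x|, hf.abs.add hg.abs, ?_⟩
  ext x
  constructor
  · rintro ⟨h1, h2⟩; simp_all
  · intro h
    have := add_eq_zero_iff_of_nonneg (abs_nonneg (f x)) (abs_nonneg (g x)) |>.mp h
    simpa using this

/-- If a zero set meets every member of a z-ultrafilter, it belongs to it. -/
lemma zultra_mem_of_mesh [TopologicalSpace X] {U : Set (Set X)} (hU : IsZUltrafilter U)
    {Z : Set X} (hZ : IsZeroSet Z) (h : ∀ W ∈ U, (Z ∩ W).Nonempty) : Z ∈ U := by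
  obtain ⟨⟨hzero, hemp, huniv, hinter, hsup⟩, hmax⟩ := hU
  set G : Set (Set X) := {A | IsZeroSet A ∧ ∃ W ∈ U, Z ∩ W ⊆ A} with hG
  have hGf : IsZFilter G := by
    refine ⟨fun A hA => hA.1, ?_, ⟨isZeroSet_univ', univ, huniv, subset_univ _⟩, ?_, ?_⟩
    · rintro ⟨-, W, hW, hsub⟩
      exact (h W hW).ne_empty (subset_empty_iff.mp hsub)
    · rintro A₁ ⟨hA₁, W₁, hW₁, hs₁⟩ A₂ ⟨hA₂, W₂, hW₂, hs₂⟩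
      exact ⟨hA₁.inter' hA₂, W₁ ∩ W₂, hinter _ hW₁ _ hW₂,
        fun x hx => ⟨hs₁ ⟨hx.1, hx.2.1⟩, hs₂ ⟨hx.1, hx.2.2⟩⟩⟩
    · rintro A₁ ⟨hA₁, W, hW, hs⟩ A₂ hA₂ hsub
      exact ⟨hA₂, W, hW, hs.trans hsub⟩
  have hUG : U ⊆ G := fun W hW => ⟨hzero W hW, W, hW, inter_subset_right⟩
  have := hmax G hGf hUG
  rw [← this]
  exact ⟨hZ, univ, huniv, by simp⟩

/-- Every member of a z-ultrafilter containing a prime z-filter is a countable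
intersection of members of the prime filter. -/
lemma prime_decomp [TopologicalSpace X] {F U : Set (Set X)} (hF : IsPrimeZFilter F)
    (hU : IsZUltrafilter U) (hFU : F ⊆ U) {Z : Set X} (hZ : Z ∈ U) :
    ∃ E : ℕ → Set X, (∀ n, E n ∈ F) ∧ (⋂ n, E n) = Z := by
  obtain ⟨f, hf, rfl⟩ := hU.1.1 Z hZ
  refine ⟨fun n => {x | |f x| ≤ 1 / (n + 1)}, fun n => ?_, ?_⟩
  · have hEz : IsZeroSet {x | |f x| ≤ 1 / ((n : ℝ) + 1)} := isZeroSet_le hf.abs _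
    have hDz : IsZeroSet {x | 1 / ((n : ℝ) + 1) ≤ |f x|} := isZeroSet_ge hf.abs _
    have hcover : {x | |f x| ≤ 1 / ((n : ℝ) + 1)} ∪ {x | 1 / ((n : ℝ) + 1) ≤ |f x|} = univ := by
      ext x; simpa using le_total (|f x|) (1 / ((n : ℝ) + 1))
    have := hF.2 _ _ hEz hDz (by rw [hcover]; exact hF.1.2.2.1)
    rcases this with hE | hD
    · exact hE
    · exfalso
      have hDU : {x | 1 / ((n : ℝ) + 1) ≤ |f x|} ∈ U := hFU hD
      have : {x | f x = 0} ∩ {x | 1 / ((n : ℝ) + 1) ≤ |f x|} ∈ U := hU.1.2.2.2.1 _ hZ _ hDU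
      have hempty : {x | f x = 0} ∩ {x | 1 / ((n : ℝ) + 1) ≤ |f x|} = ∅ := by
        ext x
        simp only [mem_inter_iff, mem_setOf_eq, mem_empty_iff_false, iff_false]
        rintro ⟨h0, hge⟩
        rw [h0, abs_zero] at hge
        have : (0:ℝ) < 1 / ((n : ℝ) + 1) := by positivity
        linarith
      rw [hempty] at this
      exact hU.1.2.1 this
  · ext x
    simp only [mem_iInter, mem_setOf_eq]
    constructor
    · intro hx
      by_contra h0
      have habs : 0 < |f x| := abs_pos.mpr h0
      obtain ⟨n, hn⟩ := exists_nat_one_div_lt habs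
      exact absurd (hx n) (by exact_mod_cast hn.not_ge)
    · intro hx n
      rw [hx]
      simp
      positivity

lemma exists_zultra [TopologicalSpace X] {F : Set (Set X)} (hF : IsZFilter F) :
    ∃ U, IsZUltrafilter U ∧ F ⊆ U := by
  have hzorn : ∀ c ⊆ {G : Set (Set X) | IsZFilter G ∧ F ⊆ G}, IsChain (· ⊆ ·) c →
      c.Nonempty → ∃ ub ∈ {G : Set (Set X) | IsZFilter G ∧ F ⊆ G}, ∀ s ∈ c, s ⊆ ub := by
    rintro c hcS hchain ⟨G₀, hG₀⟩
    refine ⟨⋃₀ c, ⟨⟨?_, ?_, ?_, ?_, ?_⟩, ?_⟩, fun s hs => subset_sUnion_of_mem hs⟩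
    · rintro Z ⟨G, hG, hZ⟩; exact (hcS hG).1.1 Z hZ
    · rintro ⟨G, hG, hZ⟩; exact (hcS hG).1.2.1 hZ
    · exact ⟨G₀, hG₀, (hcS hG₀).1.2.2.1⟩
    · rintro Z₁ ⟨G₁, hG₁, hZ₁⟩ Z₂ ⟨G₂, hG₂, hZ₂⟩
      rcases hchain.total hG₁ hG₂ with h | h
      · exact ⟨G₂, hG₂, (hcS hG₂).1.2.2.2.1 _ (h hZ₁) _ hZ₂⟩
      · exact ⟨G₁, hG₁, (hcS hG₁).1.2.2.2.1 _ hZ₁ _ (h hZ₂)⟩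
    · rintro Z₁ ⟨G, hG, hZ₁⟩ Z₂ hz hsub
      exact ⟨G, hG, (hcS hG).1.2.2.2.2 _ hZ₁ _ hz hsub⟩
    · exact (hcS hG₀).2.trans (subset_sUnion_of_mem hG₀)
  obtain ⟨m, hFm, hmax⟩ := zorn_subset_nonempty _ hzorn F ⟨hF, subset_rfl⟩
  refine ⟨m, ⟨hmax.1.1, fun G hG hmG => ?_⟩, hmax.1.2⟩
  exact subset_antisymm (hmax.2 ⟨hG, hmax.1.2.trans hmG⟩ hmG) hmG

theorem stmt1' [TopologicalSpace X] (F : Set (Set X))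
    (hF : IsPrimeZFilter F) (hCIP : HasCIP F) :
    ∃! U : Set (Set X), IsZUltrafilter U ∧ HasCIP U ∧ F ⊆ U := by
  obtain ⟨U, hU, hFU⟩ := exists_zultra hF.1
  have hUCIP : HasCIP U := by
    intro s hs
    choose E hEF hEeq using fun n => prime_decomp hF hU hFU (hs n)
    have hne := hCIP (fun k => E (Nat.unpair k).1 (Nat.unpair k).2) (fun k => hEF _ _)
    refine hne.mono ?_
    intro x hx
    simp only [mem_iInter] at hx ⊢
    intro n
    rw [← hEeq n]
    simp only [mem_iInter]
    intro m
    simpa using hx (Nat.pair n m)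
  refine ⟨U, ⟨hU, hUCIP, hFU⟩, ?_⟩
  rintro U' ⟨hU', hU'CIP, hFU'⟩
  have hsub : U' ⊆ U := by
    intro Z hZ
    by_contra hZU
    have hZzero : IsZeroSet Z := hU'.1.1 Z hZ
    have hmesh : ¬ ∀ W ∈ U, (Z ∩ W).Nonempty := fun h => hZU (zultra_mem_of_mesh hU hZzero h)
    push_neg at hmesh
    obtain ⟨W, hW, hdisj⟩ := hmesh
    obtain ⟨f, hfc, hfZ⟩ := hZzero
    obtain ⟨g, hgc, hgW⟩ := hU.1.1 W hW
    have hden : ∀ x, 0 < |f x| + |g x| := by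
      intro x
      rcases lt_or_eq_of_le (by positivity : (0:ℝ) ≤ |f x| + |g x|) with h | h
      · exact h
      · exfalso
        have haf := abs_nonneg (f x)
        have hag := abs_nonneg (g x)
        have hf0 : f x = 0 := abs_eq_zero.mp (by linarith)
        have hg0 : g x = 0 := abs_eq_zero.mp (by linarith)
        have : x ∈ Z ∩ W := ⟨by rw [hfZ]; exact hf0, by rw [hgW]; exact hg0⟩
        rw [hdisj] at this
        exact this
    set h : X → ℝ := fun x => |f x| / (|f x| + |g x|) with hh
    have hhc : Continuous h := hfc.abs.div (hfc.abs.add hgc.abs) (fun x => (hden x).ne')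
    have hZ0 : ∀ x ∈ Z, h x = 0 := by
      intro x hx
      rw [hfZ] at hx
      simp only [hh, div_eq_zero_iff]
      exact Or.inl (abs_eq_zero.mpr hx)
    have hW1 : ∀ x ∈ W, h x = 1 := by
      intro x hx
      have hgx : g x = 0 := by rw [hgW] at hx; exact hx
      have hfx : f x ≠ 0 := by
        intro h0
        have : x ∈ Z ∩ W := ⟨by rw [hfZ]; exact h0, hx⟩
        rw [hdisj] at this; exact this
      simp only [hh, hgx, abs_zero, add_zero]
      exact div_self (abs_ne_zero.mpr hfx)
    have hAz : IsZeroSet {x | h x ≤ 1/2} := isZeroSet_le hhc _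
    have hBz : IsZeroSet {x | (1:ℝ)/2 ≤ h x} := isZeroSet_ge hhc _
    have hcover : {x | h x ≤ 1/2} ∪ {x | (1:ℝ)/2 ≤ h x} = univ := by
      ext x; simpa using le_total (h x) (1/2)
    rcases hF.2 _ _ hAz hBz (by rw [hcover]; exact hF.1.2.2.1) with hA | hB
    · have hAU : {x | h x ≤ 1/2} ∈ U := hFU hA
      have hmem : {x | h x ≤ 1/2} ∩ W ∈ U := hU.1.2.2.2.1 _ hAU _ hW
      have hempty : {x | h x ≤ 1/2} ∩ W = ∅ := by
        ext x
        simp only [mem_inter_iff, mem_setOf_eq, mem_empty_iff_false, iff_false, not_and]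
        intro hle hxW
        rw [hW1 x hxW] at hle
        norm_num at hle
      rw [hempty] at hmem
      exact hU.1.2.1 hmem
    · have hBU : {x | (1:ℝ)/2 ≤ h x} ∈ U' := hFU' hB
      have hmem : {x | (1:ℝ)/2 ≤ h x} ∩ Z ∈ U' := hU'.1.2.2.2.1 _ hBU _ hZ
      have hempty : {x | (1:ℝ)/2 ≤ h x} ∩ Z = ∅ := by
        ext x
        simp only [mem_inter_iff, mem_setOf_eq, mem_empty_iff_false, iff_false, not_and]
        intro hle hxZ
        rw [hZ0 x hxZ] at hle
        norm_num at hle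
      rw [hempty] at hmem
      exact hU'.1.2.1 hmem
  exact (hU'.2 U hU.1 hsub).symm

/-- every prime z-filter with CIP is contained in a unique real z-ultrafilter. -/
theorem stmt1 [TopologicalSpace X] [T35Space X] (F : Set (Set X))
    (hF : IsPrimeZFilter F) (hCIP : HasCIP F) :
    ∃! U : Set (Set X), IsZUltrafilter U ∧ HasCIP U ∧ F ⊆ U :=
  stmt1' F hF hCIP
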